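/- Let n ≥ 1 and r ∈ (0,1), and define f_n(θ) = cot(nθ) + ((1−r)/(1+r))·cot(θ/2) for θ ∈ [(2n−1)π/(2n), π). Then f_n is strictly decreasing on this interval, f_n((2n−1)π/(2n)) = ((1−r)/(1+r))·cot((2n−1)π/(4n)) > 0, f_n(θ) → −∞ as θ → π⁻, and consequently there exists a unique θ* ∈ [(2n−1)π/(2n), π) with f_n(θ*) = 0. -/

import Mathlib

/-!
On `((k - 1)π, kπ)` the cotangent equals `tan ((k - 1/2)π - x)`, so it inherits strict
monotonicity, continuity and the limit `-∞` at the right endpoint from `tan` on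
`(-π/2, π/2)`. For `θ ∈ [(2n-1)π/(2n), π)` we have `nθ ∈ ((n-1)π, nπ)` and `θ/2 ∈ (0, π)`, so
`f_n` is continuous, strictly decreasing and tends to `-∞` at `π`. At the left endpoint
`cos (nθ) = 0`, leaving only the positive half-angle term; the intermediate value theorem and
injectivity give the unique zero.
-/

/-- The function `f_n(θ) = cot(nθ) + ((1-r)/(1+r))·cot(θ/2)`. -/
noncomputable def fcot (n : ℕ) (r : ℝ) (θ : ℝ) : ℝ :=
  Real.cot (n * θ) + ((1 - r) / (1 + r)) * Real.cot (θ / 2)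

open Real Set Filter Topology

namespace Real

theorem cot_eq_tan_sub (k : ℤ) (x : ℝ) : cot x = tan ((k - 1 / 2) * π - x) := by
  rw [show (k - 1 / 2) * π - x = π / 2 - x + ((k - 1 : ℤ) : ℝ) * π by push_cast; ring,
    tan_periodic.int_mul, tan_pi_div_two_sub, ← cot_inv_eq_tan, inv_inv]

theorem mapsTo_sub_Ioo_mul_pi (k : ℤ) :
    MapsTo (fun x => (k - 1 / 2) * π - x) (Ioo ((k - 1) * π) (k * π)) (Ioo (-(π / 2)) (π / 2)) :=
  fun x hx => ⟨by linarith [hx.2], by linarith [hx.1]⟩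

theorem strictAntiOn_cot (k : ℤ) : StrictAntiOn cot (Ioo ((k - 1) * π) (k * π)) := by
  intro x hx y hy hxy
  rw [cot_eq_tan_sub k, cot_eq_tan_sub k]
  exact strictMonoOn_tan (mapsTo_sub_Ioo_mul_pi k hy) (mapsTo_sub_Ioo_mul_pi k hx) (by linarith)

theorem continuousOn_cot (k : ℤ) : ContinuousOn cot (Ioo ((k - 1) * π) (k * π)) :=
  (continuousOn_tan_Ioo.comp (continuous_sub_left _).continuousOn
    (mapsTo_sub_Ioo_mul_pi k)).congr fun x _ => cot_eq_tan_sub k x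

theorem tendsto_cot_nhdsLT (k : ℤ) : Tendsto cot (𝓝[<] (k * π)) atBot := by
  have h : Tendsto (fun x => (k - 1 / 2) * π - x) (𝓝[<] (k * π)) (𝓝[>] (-(π / 2))) := by
    have hmaps : MapsTo (fun x => (k - 1 / 2) * π - x) (Iio (k * π)) (Ioi (-(π / 2))) :=
      fun x hx => by simp only [mem_Ioi]; linarith [mem_Iio.1 hx]
    convert (continuous_sub_left _).continuousWithinAt.tendsto_nhdsWithin hmaps using 2
    ring
  exact (tendsto_tan_neg_pi_div_two.comp h).congr fun x => (cot_eq_tan_sub k x).symm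

theorem cot_pos_of_pos_of_lt_pi_div_two {x : ℝ} (h0 : 0 < x) (hπ : x < π / 2) : 0 < cot x := by
  rw [cot_eq_cos_div_sin]
  exact div_pos (cos_pos_of_mem_Ioo ⟨by linarith, hπ⟩) (sin_pos_of_pos_of_lt_pi h0 (by linarith))

end Real

theorem StrictAntiOn.existsUnique_eq_of_tendsto_atBot {f : ℝ → ℝ} {a b y : ℝ} (hab : a < b)
    (hf : StrictAntiOn f (Ico a b)) (hcont : ContinuousOn f (Ico a b)) (ha : y ≤ f a)
    (hb : Tendsto f (𝓝[<] b) atBot) : ∃! x, x ∈ Ico a b ∧ f x = y := by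
  obtain ⟨c, hc, hca⟩ := ((hb.eventually (eventually_lt_atBot y)).and
    (Ioo_mem_nhdsLT hab)).exists
  have hIcc : Icc a c ⊆ Ico a b := Icc_subset_Ico_right hca.2
  obtain ⟨x, hx, hfx⟩ := intermediate_value_Icc' hca.1.le (hcont.mono hIcc) ⟨hc.le, ha⟩
  exact ⟨x, ⟨hIcc hx, hfx⟩, fun x' hx' => hf.injOn hx'.1 (hIcc hx) (hx'.2.trans hfx.symm)⟩

section fcot

variable {n : ℕ} {r : ℝ}

theorem mapsTo_natCast_mul_Ioo (hn : 0 < n) :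
    MapsTo (fun θ => (n : ℝ) * θ) (Ioo ((n - 1) * π / n) π) (Ioo ((n - 1) * π) (n * π)) := by
  have hn' : (0 : ℝ) < n := by exact_mod_cast hn
  intro θ hθ
  exact ⟨by simpa [mul_comm] using (div_lt_iff₀ hn').1 hθ.1, mul_lt_mul_of_pos_left hθ.2 hn'⟩

theorem mapsTo_div_two_Ioo (hn : 0 < n) :
    MapsTo (fun θ : ℝ => θ / 2) (Ioo ((n - 1) * π / n) π) (Ioo 0 π) := by
  have hn' : (1 : ℝ) ≤ n := by exact_mod_cast hn
  have hlower : (0 : ℝ) ≤ (n - 1) * π / n := by positivity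
  intro θ hθ
  constructor <;> linarith [hθ.1, hθ.2, pi_pos]

theorem strictAntiOn_fcot (hn : 0 < n) (hc : 0 ≤ (1 - r) / (1 + r)) :
    StrictAntiOn (fcot n r) (Ioo ((n - 1) * π / n) π) := by
  have hcot_mul : StrictAntiOn cot (Ioo ((n - 1) * π) (n * π)) := by
    simpa using Real.strictAntiOn_cot n
  have hcot_half : StrictAntiOn cot (Ioo 0 π) := by simpa using Real.strictAntiOn_cot 1
  refine (hcot_mul.comp_strictMonoOn (fun x _ y _ h => ?_)
    (mapsTo_natCast_mul_Ioo hn)).add_antitone fun x hx y hy h => mul_le_mul_of_nonneg_left ?_ hc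
  · exact mul_lt_mul_of_pos_left h (by exact_mod_cast hn)
  · exact (hcot_half.comp_strictMonoOn (fun x _ y _ h => div_lt_div_of_pos_right h two_pos)
      (mapsTo_div_two_Ioo hn)).antitoneOn hx hy h

theorem continuousOn_fcot (hn : 0 < n) : ContinuousOn (fcot n r) (Ioo ((n - 1) * π / n) π) := by
  have hcot_mul : ContinuousOn cot (Ioo ((n - 1) * π) (n * π)) := by
    simpa using Real.continuousOn_cot n
  have hcot_half : ContinuousOn cot (Ioo 0 π) := by simpa using Real.continuousOn_cot 1
  exact (hcot_mul.comp (continuous_const_mul _).continuousOn (mapsTo_natCast_mul_Ioo hn)).add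
    (continuousOn_const.mul
      (hcot_half.comp (continuous_id.div_const _).continuousOn (mapsTo_div_two_Ioo hn)))

theorem tendsto_fcot_nhdsLT_pi (hn : 0 < n) : Tendsto (fcot n r) (𝓝[<] π) atBot := by
  have hmul : Tendsto (fun θ => (n : ℝ) * θ) (𝓝[<] π) (𝓝[<] (n * π)) :=
    (continuous_const_mul _).continuousWithinAt.tendsto_nhdsWithin
      fun θ (hθ : θ < π) => mul_lt_mul_of_pos_left hθ (by exact_mod_cast hn)
  have hcot_mul : Tendsto cot (𝓝[<] (n * π)) atBot := by simpa using Real.tendsto_cot_nhdsLT n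
  have hcot_half : ContinuousAt cot (π / 2) := by
    have hcot : ContinuousOn cot (Ioo 0 π) := by simpa using Real.continuousOn_cot 1
    exact hcot.continuousAt (Ioo_mem_nhds (by positivity) (by linarith [pi_pos]))
  have hhalf : Tendsto (fun θ => (1 - r) / (1 + r) * cot (θ / 2)) (𝓝[<] π)
      (𝓝 ((1 - r) / (1 + r) * cot (π / 2))) :=
    ((hcot_half.tendsto.comp ((continuous_id.div_const 2).tendsto π)).const_mul _).mono_left
      nhdsWithin_le_nhds
  exact (hcot_mul.comp hmul).atBot_add hhalf

theorem fcot_two_mul_sub_one_mul_pi_div (hn : n ≠ 0) :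
    fcot n r ((2 * n - 1) * π / (2 * n)) =
      (1 - r) / (1 + r) * cot ((2 * n - 1) * π / (4 * n)) := by
  have hn' : (n : ℝ) ≠ 0 := by exact_mod_cast hn
  have hcos : cos (n * ((2 * n - 1) * π / (2 * n))) = 0 :=
    cos_eq_zero_iff.2 ⟨n - 1, by push_cast; field_simp; ring⟩
  rw [fcot, cot_eq_cos_div_sin, hcos, zero_div, zero_add, div_div]
  ring_nf

theorem two_mul_sub_one_mul_pi_div_mem_Ioo (hn : 0 < n) :
    (2 * n - 1) * π / (2 * n) ∈ Ioo ((n - 1) * π / n) π := by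
  have hn' : (0 : ℝ) < n := by exact_mod_cast hn
  constructor
  · rw [div_lt_div_iff₀ hn' (by positivity)]
    nlinarith [pi_pos]
  · rw [div_lt_iff₀ (by positivity)]
    nlinarith [pi_pos]

theorem cot_two_mul_sub_one_mul_pi_div_pos (hn : 0 < n) :
    0 < cot ((2 * n - 1) * π / (4 * n)) := by
  have hn' : (1 : ℝ) ≤ n := by exact_mod_cast hn
  apply cot_pos_of_pos_of_lt_pi_div_two
  · have hnum : (0 : ℝ) < 2 * n - 1 := by linarith
    positivity
  · rw [div_lt_iff₀ (by positivity)]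
    nlinarith [pi_pos]

end fcot

theorem stmt11 (n : ℕ) (hn : 1 ≤ n) (r : ℝ) (hr : r ∈ Set.Ioo (0 : ℝ) 1) :
    StrictAntiOn (fcot n r) (Set.Ico ((2 * n - 1) * Real.pi / (2 * n)) Real.pi) ∧
      fcot n r ((2 * n - 1) * Real.pi / (2 * n)) =
        ((1 - r) / (1 + r)) * Real.cot ((2 * n - 1) * Real.pi / (4 * n)) ∧
      0 < fcot n r ((2 * n - 1) * Real.pi / (2 * n)) ∧
      Filter.Tendsto (fcot n r) (nhdsWithin Real.pi (Set.Iio Real.pi)) Filter.atBot ∧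
      ∃! θ : ℝ, θ ∈ Set.Ico ((2 * n - 1) * Real.pi / (2 * n)) Real.pi ∧ fcot n r θ = 0 := by
  have hc : 0 < (1 - r) / (1 + r) := div_pos (by linarith [hr.2]) (by linarith [hr.1])
  have ha := two_mul_sub_one_mul_pi_div_mem_Ioo hn
  have hsub := Ico_subset_Ioo_left (b := π) ha.1
  have hval := fcot_two_mul_sub_one_mul_pi_div (r := r) (Nat.one_le_iff_ne_zero.1 hn)
  have hpos : 0 < fcot n r ((2 * n - 1) * π / (2 * n)) := by
    rw [hval]
    exact mul_pos hc (cot_two_mul_sub_one_mul_pi_div_pos hn)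
  have hanti := (strictAntiOn_fcot hn hc.le).mono hsub
  exact ⟨hanti, hval, hpos, tendsto_fcot_nhdsLT_pi hn, hanti.existsUnique_eq_of_tendsto_atBot
    ha.2 ((continuousOn_fcot hn).mono hsub) hpos.le (tendsto_fcot_nhdsLT_pi hn)⟩
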